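/- arXiv:2103.04802 — 2 statements merged into one kernel-verified Lean document; each statement's English description precedes it below -/
import Mathlib

section
/- For every β > 0 and h > 0, there exists a unique q > 0 satisfying the fixed-point equation q = E[tanh²(hξ + βz√q)], where ξ and z are independent standard Gaussian random variables. Moreover this unique q lies in (0,1). -/
open MeasureTheory Real

local notation "γ" => ProbabilityTheory.gaussianReal 0 1

/-!
Write `Ψ v = E tanh²(√v z)` (`meanTanhSq` below). Since `h ξ + β √q z` is a centred Gaussian
of variance `h² + β² q`, the fixed-point equation reads `q = Ψ (h² + β² q)`. The map
`v ↦ tanh²(√v)` is concave on `[0, ∞)`: its derivative `tanh(√v)/√v · sech²(√v)` is a product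
of nonnegative decreasing functions. Hence `Ψ` is concave and `G q = q - Ψ (h² + β² q)` is
convex. Now `G 0 = -Ψ (h²) < 0` and `G 1 > 0` because `Ψ < 1`, so `G` vanishes somewhere in
`(0, 1)`, and a convex function that is negative at `0` has at most one zero in `(0, ∞)`.
Finally every positive fixed point is a value of `Ψ`, hence is below `1`.
-/

open Set ProbabilityTheory

namespace Real

theorem hasDerivAt_tanh (x : ℝ) : HasDerivAt tanh (cosh x ^ 2)⁻¹ x := by
  have h := (hasDerivAt_sinh x).div (hasDerivAt_cosh x) (cosh_pos x).ne'
  rw [show sinh / cosh = tanh from funext fun y => (tanh_eq_sinh_div_cosh y).symm] at h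
  refine h.congr_deriv ?_
  rw [← sq, ← sq, cosh_sq_sub_sinh_sq, one_div]

@[fun_prop]
theorem continuous_tanh : Continuous tanh :=
  continuous_iff_continuousAt.2 fun x => (hasDerivAt_tanh x).continuousAt

theorem tanh_nonneg {x : ℝ} (hx : 0 ≤ x) : 0 ≤ tanh x := by
  rw [tanh_eq_sinh_div_cosh]
  exact div_nonneg (sinh_nonneg_iff.2 hx) (cosh_pos x).le

theorem antitoneOn_tanh_div_self : AntitoneOn (fun t => tanh t / t) (Ioi 0) := by
  have hderiv : ∀ t ∈ Ioi (0 : ℝ),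
      HasDerivAt (fun t => tanh t / t) (((cosh t ^ 2)⁻¹ * t - tanh t * 1) / t ^ 2) t :=
    fun t ht => (hasDerivAt_tanh t).div (hasDerivAt_id t) (ne_of_gt ht)
  refine antitoneOn_of_hasDerivWithinAt_nonpos (convex_Ioi 0)
    (fun t ht => (hderiv t ht).continuousAt.continuousWithinAt)
    (fun t ht => (hderiv t (interior_subset ht)).hasDerivWithinAt) fun t ht => ?_
  rw [interior_Ioi] at ht
  have hc := cosh_pos t
  have hsinh : t ≤ sinh t * cosh t := by
    nlinarith [self_lt_sinh_iff.2 ht, one_le_cosh t, sinh_pos_iff.2 ht]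
  apply div_nonpos_of_nonpos_of_nonneg _ (sq_nonneg t)
  rw [tanh_eq_sinh_div_cosh, sub_nonpos, mul_one, inv_mul_eq_div,
    div_le_div_iff₀ (by positivity) hc]
  nlinarith

theorem concaveOn_tanh_sqrt_sq : ConcaveOn ℝ (Ici 0) (fun v => tanh √v ^ 2) := by
  have hderiv : ∀ v ∈ Ioi (0 : ℝ),
      HasDerivAt (fun v => tanh √v ^ 2) (tanh √v / √v * (cosh √v ^ 2)⁻¹) v := by
    intro v hv
    have hs : 0 < √v := sqrt_pos.2 hv
    refine (((hasDerivAt_tanh √v).comp v (hasDerivAt_sqrt hv.ne')).fun_pow 2).congr_deriv ?_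
    simp only [Function.comp_apply]
    field_simp
    ring
  have hanti : AntitoneOn (fun v => tanh √v / √v * (cosh √v ^ 2)⁻¹) (Ioi 0) := by
    intro a ha b hb hab
    have ha' : 0 < √a := sqrt_pos.2 ha
    have hab' : √a ≤ √b := sqrt_le_sqrt hab
    have hcosh : cosh √a ^ 2 ≤ cosh √b ^ 2 := by
      gcongr
      rwa [cosh_le_cosh, abs_of_pos ha', abs_of_pos (ha'.trans_le hab')]
    exact mul_le_mul (antitoneOn_tanh_div_self ha' (ha'.trans_le hab') hab')
      (inv_anti₀ (by positivity) hcosh) (by positivity)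
      (div_nonneg (tanh_nonneg ha'.le) ha'.le)
  rw [← interior_Ici] at hderiv hanti
  exact (hanti.congr fun v hv => (hderiv v hv).deriv.symm).concaveOn_of_deriv (convex_Ici 0)
    ((continuous_tanh.comp continuous_sqrt).pow 2).continuousOn
    fun v hv => (hderiv v hv).differentiableAt.differentiableWithinAt

theorem tanh_ne_zero {x : ℝ} (hx : x ≠ 0) : tanh x ≠ 0 :=
  fun h => hx (tanh_injective (h.trans tanh_zero.symm))

end Real

section Integral

variable {α : Type*} [MeasurableSpace α] {μ : Measure α}

theorem integrable_tanh_sq_comp [IsFiniteMeasure μ] {g : α → ℝ}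
    (hg : AEStronglyMeasurable g μ) : Integrable (fun x => tanh (g x) ^ 2) μ :=
  .of_bound ((continuous_tanh.comp_aestronglyMeasurable hg).pow 2) 1 <| .of_forall fun x => by
    rw [norm_of_nonneg (sq_nonneg _)]
    exact (tanh_sq_lt_one _).le

theorem integral_pos_of_ae_pos [NeZero μ] {f : α → ℝ} (hfi : Integrable f μ)
    (hf : ∀ᵐ x ∂μ, 0 < f x) : 0 < ∫ x, f x ∂μ := by
  rw [integral_pos_iff_support_of_nonneg_ae (hf.mono fun _ => le_of_lt) hfi,
    measure_congr (ae_eq_univ.2 (hf.mono fun _ hx => hx.ne') :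
      Function.support f =ᵐ[μ] univ)]
  exact Measure.measure_univ_pos.2 (NeZero.ne μ)

theorem ConcaveOn.integral_comp_mul {φ : ℝ → ℝ} (hφ : ConcaveOn ℝ (Ici 0) φ) {g : α → ℝ}
    (hg : ∀ x, 0 ≤ g x) (hint : ∀ v, 0 ≤ v → Integrable (fun x => φ (v * g x)) μ) :
    ConcaveOn ℝ (Ici 0) (fun v => ∫ x, φ (v * g x) ∂μ) := by
  refine ⟨convex_Ici 0, fun v (hv : 0 ≤ v) w (hw : 0 ≤ w) a b ha hb hab => ?_⟩
  have hpointwise : ∀ x, a * φ (v * g x) + b * φ (w * g x) ≤ φ ((a * v + b * w) * g x) := by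
    intro x
    have := hφ.2 (mul_nonneg hv (hg x)) (mul_nonneg hw (hg x)) ha hb hab
    simp only [smul_eq_mul] at this
    rwa [add_mul, mul_assoc, mul_assoc]
  simp only [smul_eq_mul]
  rw [← integral_const_mul, ← integral_const_mul, ← integral_add ((hint v hv).const_mul a)
    ((hint w hw).const_mul b)]
  exact integral_mono (((hint v hv).const_mul a).add ((hint w hw).const_mul b))
    (hint _ (by positivity)) hpointwise

end Integral

theorem ConvexOn.eq_of_apply_eq_zero {s : Set ℝ} {f : ℝ → ℝ} (hf : ConvexOn ℝ s f)
    {a x y : ℝ} (ha : a ∈ s) (hx : x ∈ s) (hy : y ∈ s) (hfa : f a < 0) (hax : a < x) (hay : a < y)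
    (hfx : f x = 0) (hfy : f y = 0) : x = y := by
  have hle : ∀ {x y}, x ∈ s → y ∈ s → a < x → a < y → f x = 0 → f y = 0 → x ≤ y → y ≤ x := by
    intro x y hx hy hax hay hfx hfy hxy
    have := hf.secant_mono ha hx hy hax.ne' hay.ne' hxy
    rw [hfx, hfy, zero_sub, div_le_div_iff_of_pos_left (neg_pos.2 hfa) (sub_pos.2 hax)
      (sub_pos.2 hay)] at this
    linarith
  rcases le_total x y with hxy | hyx
  · exact le_antisymm hxy (hle hx hy hax hay hfx hfy hxy)
  · exact le_antisymm (hle hy hx hay hax hfy hfx hyx) hyx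

theorem gaussianReal_prod_map_linear (a c : ℝ) :
    Measure.map (fun p : ℝ × ℝ => a * p.1 + c * p.2) (Measure.prod γ γ)
      = Measure.map (fun s => √(a ^ 2 + c ^ 2) * s) γ := by
  have hL : (fun p : ℝ × ℝ => a * p.1 + c * p.2)
      = (fun p : ℝ × ℝ => p.1 + p.2) ∘ Prod.map (a * ·) (c * ·) := rfl
  rw [hL, ← Measure.map_map (by fun_prop) (by fun_prop), ← Measure.map_prod_map _ _ (by fun_prop)
    (by fun_prop), ← Measure.conv, gaussianReal_map_const_mul, gaussianReal_map_const_mul,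
    gaussianReal_map_const_mul, gaussianReal_conv_gaussianReal]
  congr 1
  · simp
  · ext; simp [Real.sq_sqrt (by positivity : 0 ≤ a ^ 2 + c ^ 2)]

theorem integral_integral_comp_linear_gaussianReal (a c : ℝ) {f : ℝ → ℝ}
    (hf : Integrable f (Measure.map (fun s => √(a ^ 2 + c ^ 2) * s) γ)) :
    ∫ x, ∫ y, f (a * x + c * y) ∂γ ∂γ = ∫ s, f (√(a ^ 2 + c ^ 2) * s) ∂γ := by
  have hf' := hf
  rw [← gaussianReal_prod_map_linear] at hf'
  rw [← integral_prod (fun p : ℝ × ℝ => f (a * p.1 + c * p.2))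
      (hf'.comp_measurable (by fun_prop)),
    ← integral_map (by fun_prop) hf'.aestronglyMeasurable, gaussianReal_prod_map_linear,
    integral_map (by fun_prop) hf.aestronglyMeasurable]

noncomputable def meanTanhSq (v : ℝ) : ℝ := ∫ s, tanh (√v * s) ^ 2 ∂γ

theorem meanTanhSq_eq_integral_tanh_sqrt {v : ℝ} (hv : 0 ≤ v) :
    meanTanhSq v = ∫ s, tanh √(v * s ^ 2) ^ 2 ∂γ := by
  refine integral_congr_ae (.of_forall fun s => ?_)
  dsimp only
  rw [sqrt_mul hv, sqrt_sq_eq_abs]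
  rcases abs_choice s with hs | hs <;> simp [hs, tanh_neg]

theorem concaveOn_meanTanhSq : ConcaveOn ℝ (Ici 0) meanTanhSq :=
  (concaveOn_tanh_sqrt_sq.integral_comp_mul sq_nonneg fun _ _ =>
    integrable_tanh_sq_comp (by fun_prop)).congr fun _ hv =>
      (meanTanhSq_eq_integral_tanh_sqrt hv).symm

theorem continuous_meanTanhSq : Continuous meanTanhSq :=
  continuous_of_dominated (fun _ => by fun_prop)
    (fun _ => .of_forall fun _ => (norm_of_nonneg (sq_nonneg _)).trans_le (tanh_sq_lt_one _).le)
    (integrable_const 1) (.of_forall fun _ => by fun_prop)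

theorem meanTanhSq_lt_one (v : ℝ) : meanTanhSq v < 1 := by
  have hint : Integrable (fun s => tanh (√v * s) ^ 2) γ := integrable_tanh_sq_comp (by fun_prop)
  have : 0 < ∫ s, (1 - tanh (√v * s) ^ 2) ∂γ := integral_pos_of_ae_pos
    ((integrable_const 1).sub hint) (.of_forall fun s => sub_pos.2 (tanh_sq_lt_one (√v * s)))
  rw [integral_sub (integrable_const 1) hint] at this
  simpa [meanTanhSq] using this

theorem meanTanhSq_pos {v : ℝ} (hv : 0 < v) : 0 < meanTanhSq v :=
  integral_pos_of_ae_pos (integrable_tanh_sq_comp (by fun_prop)) <|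
    ((volume.ae_ne 0).filter_mono (gaussianReal_absolutelyContinuous 0 one_ne_zero).ae_le).mono
      fun s hs => sq_pos_of_ne_zero (tanh_ne_zero (mul_ne_zero (sqrt_pos.2 hv).ne' hs))

theorem integral_integral_tanh_sq_eq_meanTanhSq {h β q : ℝ} (hq : 0 ≤ q) :
    ∫ ξ, ∫ z, tanh (h * ξ + β * z * √q) ^ 2 ∂γ ∂γ = meanTanhSq (h ^ 2 + β ^ 2 * q) := by
  have hvar : (β * √q) ^ 2 = β ^ 2 * q := by rw [mul_pow, sq_sqrt hq]
  have := integral_integral_comp_linear_gaussianReal h (β * √q) (f := fun x => tanh x ^ 2)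
    (integrable_tanh_sq_comp aestronglyMeasurable_id)
  rw [hvar] at this
  rw [meanTanhSq, ← this]
  congr 1 with ξ
  congr 1 with z
  ring_nf

theorem stmt_1_general (β h : ℝ) (hh : 0 < h) :
    (∃! q : ℝ, 0 < q ∧
      q = ∫ ξ, ∫ z, Real.tanh (h * ξ + β * z * Real.sqrt q) ^ 2 ∂γ ∂γ) ∧
    (∀ q : ℝ, 0 < q →
      q = (∫ ξ, ∫ z, Real.tanh (h * ξ + β * z * Real.sqrt q) ^ 2 ∂γ ∂γ) →
      q ∈ Set.Ioo (0 : ℝ) 1) := by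
  set G : ℝ → ℝ := fun q => q - meanTanhSq (h ^ 2 + β ^ 2 * q)
  have hfix : ∀ q, 0 < q →
      (q = ∫ ξ, ∫ z, tanh (h * ξ + β * z * √q) ^ 2 ∂γ ∂γ ↔ G q = 0) := fun q hq => by
    rw [integral_integral_tanh_sq_eq_meanTanhSq hq.le, sub_eq_zero]
  have hG0 : G 0 < 0 := sub_neg.2 (meanTanhSq_pos (by positivity))
  have hG1 : 0 < G 1 := sub_pos.2 (meanTanhSq_lt_one _)
  have hGconv : ConvexOn ℝ (Ici 0) G := by
    let A : ℝ →ᵃ[ℝ] ℝ := ⟨fun q => h ^ 2 + β ^ 2 * q, β ^ 2 • LinearMap.id, fun p v => by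
      simp only [vadd_eq_add, LinearMap.smul_apply, LinearMap.id_apply, smul_eq_mul]; ring⟩
    refine (convexOn_id (convex_Ici 0)).sub ((concaveOn_meanTanhSq.comp_affineMap A).subset
      (fun q (hq : 0 ≤ q) => show 0 ≤ h ^ 2 + β ^ 2 * q by positivity) (convex_Ici 0))
  have hGcont : Continuous G := continuous_id.sub (continuous_meanTanhSq.comp (by fun_prop))
  obtain ⟨q₀, hq₀, hGq₀⟩ := intermediate_value_Ioo zero_le_one hGcont.continuousOn ⟨hG0, hG1⟩
  refine ⟨⟨q₀, ⟨hq₀.1, (hfix q₀ hq₀.1).2 hGq₀⟩, fun q ⟨hq, hqfix⟩ => ?_⟩, fun q hq hqfix => ?_⟩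
  · exact hGconv.eq_of_apply_eq_zero self_mem_Ici hq.le hq₀.1.le hG0 hq hq₀.1
      ((hfix q hq).1 hqfix) hGq₀
  · rw [integral_integral_tanh_sq_eq_meanTanhSq hq.le] at hqfix
    exact ⟨hq, hqfix ▸ meanTanhSq_lt_one _⟩

/-- For every `β > 0` and `h > 0`, there exists a unique `q > 0` satisfying
`q = E[tanh²(hξ + βz√q)]`; moreover this unique `q` lies in `(0,1)`. -/
theorem stmt_1 (β h : ℝ) (hβ : 0 < β) (hh : 0 < h) :
    (∃! q : ℝ, 0 < q ∧
      q = ∫ ξ, ∫ z, Real.tanh (h * ξ + β * z * Real.sqrt q) ^ 2 ∂γ ∂γ) ∧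
    (∀ q : ℝ, 0 < q →
      q = (∫ ξ, ∫ z, Real.tanh (h * ξ + β * z * Real.sqrt q) ^ 2 ∂γ ∂γ) →
      q ∈ Set.Ioo (0 : ℝ) 1) :=
  stmt_1_general β h hh
end

section
/- Fix β > 0, h > 0 and q ∈ [0,1). For s ∈ (q,1) set Y(s) = hξ + βz√q + βz'√(s−q). Then the function s ↦ E[ E'[tanh²(Y(s))·cosh(Y(s))] / E'[cosh(Y(s))] ] is differentiable on (q,1) and its derivative at s equals β² · E[ E'[cosh⁻³(Y(s))] / E'[cosh(Y(s))] ]. -/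
open MeasureTheory Real

local notation "γ" => ProbabilityTheory.gaussianReal 0 1

/-!
Write `a = hξ + βz√q` and `u = β√(t - q)`. Since `tanh² y cosh y = cosh y - 1 / cosh y` and
`E'[cosh (a + u z')] = cosh a · exp (u² / 2)`, the inner ratio equals
`1 - exp (-u² / 2) (cosh a)⁻¹ E'[(cosh (a + u z'))⁻¹]`. Gaussian integration by parts gives
`d/du E'[(cosh (a + u z'))⁻¹] = u E'[(cosh)⁻¹ - 2 (cosh)⁻³]`, so the `u`-derivative of the ratio
is `2u · E'[cosh⁻³] / E'[cosh]`, and `d(u²)/dt = β²`. Both the ratio and its derivative are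
bounded uniformly in `(ξ, z)`, so the two outer Gaussian integrals can be differentiated under
the integral sign.
-/

open ProbabilityTheory
open scoped NNReal

namespace ProbabilityTheory

variable {μ : ℝ} {v : ℝ≥0}

lemma integrable_gaussianReal_iff (hv : v ≠ 0) {f : ℝ → ℝ} :
    Integrable f (gaussianReal μ v) ↔ Integrable (fun x ↦ gaussianPDFReal μ v x * f x) := by
  rw [gaussianReal_of_var_ne_zero _ hv, gaussianPDF_def, integrable_withDensity_iff_integrable_smul'
    (by fun_prop) (ae_of_all _ fun _ ↦ ENNReal.ofReal_lt_top)]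
  simp [ENNReal.toReal_ofReal (gaussianPDFReal_nonneg _ _ _)]

lemma hasDerivAt_gaussianPDFReal (μ : ℝ) (v : ℝ≥0) (x : ℝ) :
    HasDerivAt (gaussianPDFReal μ v) (-((x - μ) / v) * gaussianPDFReal μ v x) x := by
  have h : HasDerivAt (fun x ↦ -(x - μ) ^ 2 / (2 * v)) (-((x - μ) / v)) x :=
    ((((hasDerivAt_id' x).sub_const μ).pow 2).neg.div_const (2 * (v : ℝ))).congr_deriv
      (by ring)
  exact ((h.exp).const_mul (√(2 * π * v))⁻¹).congr_deriv (by rw [gaussianPDFReal]; ring)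

-- Stein's identity: Gaussian integration by parts.
theorem integral_sub_mul_gaussianReal {g g' : ℝ → ℝ} {M M' : ℝ}
    (hg : ∀ x, HasDerivAt g (g' x) x) (hgM : ∀ x, |g x| ≤ M) (hg'M : ∀ x, |g' x| ≤ M') :
    ∫ x, (x - μ) * g x ∂gaussianReal μ v = v * ∫ x, g' x ∂gaussianReal μ v := by
  rcases eq_or_ne v 0 with rfl | hv
  · simp [gaussianReal_zero_var]
  set φ := gaussianPDFReal μ v
  have hφ : ∀ x, 0 ≤ φ x := gaussianPDFReal_nonneg μ v
  have hg_cont : Continuous g := continuous_iff_continuousAt.2 fun x ↦ (hg x).continuousAt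
  have hg'_meas : Measurable g' := by
    simpa [funext fun x ↦ (hg x).deriv] using measurable_deriv g
  have hφ_int : Integrable φ := integrable_gaussianPDFReal μ v
  have hφg : Integrable fun x ↦ φ x * g x :=
    (hφ_int.mul_const M).mono' (by fun_prop) (ae_of_all _ fun x ↦ by
      simpa [abs_of_nonneg (hφ x)] using mul_le_mul_of_nonneg_left (hgM x) (hφ x))
  have hφg' : Integrable fun x ↦ φ x * g' x :=
    (hφ_int.mul_const M').mono' (hφ_int.aestronglyMeasurable.mul hg'_meas.aestronglyMeasurable)
      (ae_of_all _ fun x ↦ by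
        simpa [abs_of_nonneg (hφ x)] using mul_le_mul_of_nonneg_left (hg'M x) (hφ x))
  have hxφg : Integrable fun x ↦ φ x * ((x - μ) * g x) := by
    have hx : Integrable (fun x ↦ φ x * |x - μ|) := by
      rw [← integrable_gaussianReal_iff hv]
      exact (((memLp_id_gaussianReal 1).integrable le_rfl).sub (integrable_const μ)).abs
    refine (hx.mul_const M).mono' (by fun_prop) (ae_of_all _ fun x ↦ ?_)
    rw [norm_mul, norm_mul, Real.norm_of_nonneg (hφ x), Real.norm_eq_abs, Real.norm_eq_abs,
      mul_assoc]
    exact mul_le_mul_of_nonneg_left (mul_le_mul_of_nonneg_left (hgM x) (abs_nonneg _)) (hφ x)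
  have hderiv : ∀ x, HasDerivAt (fun x ↦ φ x * g x)
      (φ x * g' x - (v : ℝ)⁻¹ * (φ x * ((x - μ) * g x))) x := fun x ↦
    ((hasDerivAt_gaussianPDFReal μ v x).mul (hg x)).congr_deriv (by ring)
  have h0 := integral_eq_zero_of_hasDerivAt_of_integrable hderiv
    (hφg'.sub (hxφg.const_mul _)) hφg
  rw [integral_sub hφg' (hxφg.const_mul _), integral_const_mul, sub_eq_zero] at h0
  rw [integral_gaussianReal_eq_integral_smul hv, integral_gaussianReal_eq_integral_smul hv]
  simp only [smul_eq_mul]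
  rw [h0, mul_inv_cancel_left₀ (NNReal.coe_ne_zero.2 hv)]

lemma integral_exp_mul_gaussianReal (t : ℝ) :
    ∫ x, exp (t * x) ∂gaussianReal μ v = exp (μ * t + v * t ^ 2 / 2) :=
  congrFun mgf_fun_id_gaussianReal t

lemma integrable_cosh_add_mul_gaussianReal (a u : ℝ) :
    Integrable (fun x ↦ cosh (a + u * x)) (gaussianReal μ v) := by
  simp only [cosh_eq, exp_add, neg_add, ← neg_mul]
  exact (((integrable_exp_mul_gaussianReal u).const_mul _).add
    ((integrable_exp_mul_gaussianReal (-u)).const_mul _)).div_const 2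

lemma integral_cosh_add_mul_gaussianReal (a u : ℝ) :
    ∫ x, cosh (a + u * x) ∂gaussianReal μ v = cosh (a + u * μ) * exp (v * u ^ 2 / 2) := by
  simp only [cosh_eq, exp_add, neg_add, ← neg_mul]
  rw [integral_div, integral_add ((integrable_exp_mul_gaussianReal u).const_mul _)
    ((integrable_exp_mul_gaussianReal (-u)).const_mul _), integral_const_mul, integral_const_mul,
    integral_exp_mul_gaussianReal, integral_exp_mul_gaussianReal]
  simp only [exp_add, neg_sq, mul_neg, neg_mul, exp_neg]
  rw [mul_comm u μ]
  ring

end ProbabilityTheory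

lemma integral_mem_Icc_zero_one {α : Type*} [MeasurableSpace α] {μ : Measure α}
    [IsProbabilityMeasure μ] {f : α → ℝ} (hf : AEStronglyMeasurable f μ)
    (hf_mem : ∀ x, f x ∈ Set.Icc 0 1) : ∫ x, f x ∂μ ∈ Set.Icc 0 1 := by
  refine ⟨integral_nonneg fun x ↦ (hf_mem x).1, ?_⟩
  calc ∫ x, f x ∂μ ≤ ∫ _, 1 ∂μ :=
        integral_mono (.of_bound hf 1 (ae_of_all _ fun x ↦ by
          simpa [abs_of_nonneg (hf_mem x).1] using (hf_mem x).2)) (integrable_const 1)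
          fun x ↦ (hf_mem x).2
    _ = 1 := by simp

lemma measurable_integral_comp_add_mul {μ : Measure ℝ} [SFinite μ] {f : ℝ → ℝ}
    (hf : Measurable f) (u : ℝ) : Measurable fun a ↦ ∫ x, f (a + u * x) ∂μ :=
  (Measurable.stronglyMeasurable (f := fun p : ℝ × ℝ ↦ f (p.1 + u * p.2))
    (by fun_prop)).integral_prod_right'.measurable

section ParametricIntegral

variable {X Y : Type*} [MeasurableSpace X] [MeasurableSpace Y] {U : Set ℝ} {C C' : ℝ}

lemma hasDerivAt_integral_of_forall_norm_le {μ : Measure X} [IsFiniteMeasure μ]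
    {F F' : ℝ → X → ℝ} (hU : IsOpen U)
    (hF_meas : ∀ t ∈ U, AEStronglyMeasurable (F t) μ) (hF : ∀ t ∈ U, ∀ x, ‖F t x‖ ≤ C)
    (hF'_meas : ∀ t ∈ U, AEStronglyMeasurable (F' t) μ) (hF' : ∀ t ∈ U, ∀ x, ‖F' t x‖ ≤ C')
    (hderiv : ∀ t ∈ U, ∀ x, HasDerivAt (F · x) (F' t x) t) {t : ℝ} (ht : t ∈ U) :
    HasDerivAt (fun t ↦ ∫ x, F t x ∂μ) (∫ x, F' t x ∂μ) t :=
  (hasDerivAt_integral_of_dominated_loc_of_deriv_le (hU.mem_nhds ht)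
    (Filter.mem_of_superset (hU.mem_nhds ht) hF_meas)
    (.of_bound (hF_meas t ht) C (ae_of_all _ (hF t ht))) (hF'_meas t ht)
    (ae_of_all _ fun x s hs ↦ hF' s hs x) (integrable_const C')
    (ae_of_all _ fun x s hs ↦ hderiv s hs x)).2

lemma hasDerivAt_integral_integral_of_forall_norm_le {μ : Measure X} {ν : Measure Y}
    [IsProbabilityMeasure μ] [IsProbabilityMeasure ν] {F F' : ℝ → X → Y → ℝ} (hU : IsOpen U)
    (hF_meas : ∀ t ∈ U, Measurable fun p : X × Y ↦ F t p.1 p.2)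
    (hF : ∀ t ∈ U, ∀ x y, ‖F t x y‖ ≤ C)
    (hF'_meas : ∀ t ∈ U, Measurable fun p : X × Y ↦ F' t p.1 p.2)
    (hF' : ∀ t ∈ U, ∀ x y, ‖F' t x y‖ ≤ C')
    (hderiv : ∀ t ∈ U, ∀ x y, HasDerivAt (F · x y) (F' t x y) t) {t : ℝ} (ht : t ∈ U) :
    HasDerivAt (fun t ↦ ∫ x, ∫ y, F t x y ∂ν ∂μ) (∫ x, ∫ y, F' t x y ∂ν ∂μ) t := by
  have hbound {G : X → Y → ℝ} {K : ℝ} (hG : ∀ x y, ‖G x y‖ ≤ K) (x : X) :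
      ‖∫ y, G x y ∂ν‖ ≤ K := by
    simpa using norm_integral_le_of_norm_le_const (μ := ν) (ae_of_all _ (hG x))
  refine hasDerivAt_integral_of_forall_norm_le hU
    (fun t ht ↦ (hF_meas t ht).stronglyMeasurable.integral_prod_right'.aestronglyMeasurable)
    (fun t ht ↦ hbound (hF t ht))
    (fun t ht ↦ (hF'_meas t ht).stronglyMeasurable.integral_prod_right'.aestronglyMeasurable)
    (fun t ht ↦ hbound (hF' t ht)) (fun t ht x ↦ ?_) ht
  exact hasDerivAt_integral_of_forall_norm_le hU
    (fun t ht ↦ ((hF_meas t ht).comp measurable_prodMk_left).aestronglyMeasurable)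
    (fun t ht ↦ hF t ht x)
    (fun t ht ↦ ((hF'_meas t ht).comp measurable_prodMk_left).aestronglyMeasurable)
    (fun t ht ↦ hF' t ht x) (fun t ht ↦ hderiv t ht x) ht

end ParametricIntegral

namespace Real

lemma inv_cosh_mem_Icc (y : ℝ) : (cosh y)⁻¹ ∈ Set.Icc 0 1 :=
  ⟨by positivity, inv_le_one_of_one_le₀ (one_le_cosh y)⟩

lemma hasDerivAt_inv_cosh (y : ℝ) :
    HasDerivAt (fun y ↦ (cosh y)⁻¹) (-(sinh y / cosh y ^ 2)) y :=
  ((hasDerivAt_cosh y).inv (cosh_pos y).ne').congr_deriv (by ring)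

lemma hasDerivAt_sinh_div_cosh_sq (y : ℝ) :
    HasDerivAt (fun y ↦ sinh y / cosh y ^ 2) (2 * (cosh y)⁻¹ ^ 3 - (cosh y)⁻¹) y := by
  refine ((hasDerivAt_sinh y).div ((hasDerivAt_cosh y).pow 2)
    (pow_ne_zero 2 (cosh_pos y).ne')).congr_deriv ?_
  have := (cosh_pos y).ne'
  simp only [Pi.pow_apply]
  field_simp
  linear_combination (-2 * cosh y) * sinh_sq y

lemma abs_sinh_div_cosh_sq_le_one (y : ℝ) : |sinh y / cosh y ^ 2| ≤ 1 := by
  have hc := one_le_cosh y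
  have hs : |sinh y| ≤ cosh y := abs_le.2
    ⟨by linarith [sinh_neg y ▸ cosh_neg y ▸ sinh_lt_cosh (-y)], (sinh_lt_cosh y).le⟩
  have hc2 : 0 < cosh y ^ 2 := by positivity
  rw [abs_div, abs_of_pos hc2, div_le_one hc2]
  nlinarith

lemma abs_two_mul_inv_cosh_pow_three_sub_le_one (y : ℝ) :
    |2 * (cosh y)⁻¹ ^ 3 - (cosh y)⁻¹| ≤ 1 := by
  obtain ⟨h0, h1⟩ := inv_cosh_mem_Icc y
  exact abs_le.2 ⟨by nlinarith [pow_nonneg h0 3], by nlinarith [pow_le_one₀ h0 h1 (n := 2)]⟩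

end Real

lemma integral_cosh_add_mul_gaussianReal_zero_one (a u : ℝ) :
    ∫ x, cosh (a + u * x) ∂γ = cosh a * exp (u ^ 2 / 2) := by
  simp [integral_cosh_add_mul_gaussianReal]

lemma integrable_inv_cosh_add_mul_pow (a u : ℝ) (n : ℕ) :
    Integrable (fun x ↦ (cosh (a + u * x))⁻¹ ^ n) γ :=
  .of_bound (by fun_prop) 1 (ae_of_all _ fun x ↦ by
    obtain ⟨h0, h1⟩ := inv_cosh_mem_Icc (a + u * x)
    rw [norm_pow, Real.norm_of_nonneg h0]
    exact pow_le_one₀ h0 h1)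

lemma hasDerivAt_integral_inv_cosh_add_mul (a u : ℝ) :
    HasDerivAt (fun u ↦ ∫ x, (cosh (a + u * x))⁻¹ ∂γ)
      (-u * ∫ x, (2 * (cosh (a + u * x))⁻¹ ^ 3 - (cosh (a + u * x))⁻¹) ∂γ) u := by
  have hline : ∀ x v : ℝ, HasDerivAt (fun u ↦ a + u * x) x v := fun x v ↦
    ((hasDerivAt_id v).mul_const x).const_add a |>.congr_deriv (one_mul x)
  have hstein : ∫ x, x * (sinh (a + u * x) / cosh (a + u * x) ^ 2) ∂γ
      = u * ∫ x, (2 * (cosh (a + u * x))⁻¹ ^ 3 - (cosh (a + u * x))⁻¹) ∂γ := by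
    have := integral_sub_mul_gaussianReal (μ := 0) (v := 1) (M := 1) (M' := |u|)
      (g := fun x ↦ sinh (a + u * x) / cosh (a + u * x) ^ 2)
      (g' := fun x ↦ u * (2 * (cosh (a + u * x))⁻¹ ^ 3 - (cosh (a + u * x))⁻¹))
      (fun x ↦ ((hasDerivAt_sinh_div_cosh_sq _).comp x
        (((hasDerivAt_id' x).const_mul u).const_add a)).congr_deriv (by ring))
      (fun x ↦ abs_sinh_div_cosh_sq_le_one _)
      (fun x ↦ by
        rw [abs_mul]
        exact mul_le_of_le_one_right (abs_nonneg u) (abs_two_mul_inv_cosh_pow_three_sub_le_one _))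
    simpa [integral_const_mul] using this
  have key := hasDerivAt_integral_of_dominated_loc_of_deriv_le (μ := γ) (x₀ := u) Filter.univ_mem
    (F' := fun v x ↦ -(x * (sinh (a + v * x) / cosh (a + v * x) ^ 2)))
    (.of_forall fun v ↦ by
      simpa using (integrable_inv_cosh_add_mul_pow a v 1).aestronglyMeasurable)
    (by simpa using integrable_inv_cosh_add_mul_pow a u 1) (by fun_prop)
    (ae_of_all _ fun x v _ ↦ by
      rw [norm_neg, norm_mul, Real.norm_eq_abs, Real.norm_eq_abs]
      exact mul_le_of_le_one_right (abs_nonneg x) (abs_sinh_div_cosh_sq_le_one _))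
    ((memLp_id_gaussianReal 1).integrable le_rfl).abs
    (ae_of_all _ fun x v _ ↦ ((hasDerivAt_inv_cosh _).comp v (hline x v)).congr_deriv (by ring))
  rw [integral_neg, hstein, ← neg_mul] at key
  exact key.2

noncomputable def tanhSqRatio (u a : ℝ) : ℝ :=
  (∫ x, tanh (a + u * x) ^ 2 * cosh (a + u * x) ∂γ) / ∫ x, cosh (a + u * x) ∂γ

noncomputable def sechCubeRatio (u a : ℝ) : ℝ :=
  (∫ x, (cosh (a + u * x))⁻¹ ^ 3 ∂γ) / ∫ x, cosh (a + u * x) ∂γ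

lemma tanhSqRatio_eq (u a : ℝ) :
    tanhSqRatio u a = 1 - exp (-(u ^ 2 / 2)) * (cosh a)⁻¹ * ∫ x, (cosh (a + u * x))⁻¹ ∂γ := by
  have htanh : ∀ y, tanh y ^ 2 * cosh y = cosh y - (cosh y)⁻¹ := fun y ↦ by
    have := (cosh_pos y).ne'
    rw [tanh_eq_sinh_div_cosh]
    field_simp
    linear_combination sinh_sq y
  simp only [tanhSqRatio, htanh]
  rw [integral_sub (integrable_cosh_add_mul_gaussianReal a u)
    (by simpa using integrable_inv_cosh_add_mul_pow a u 1),
    integral_cosh_add_mul_gaussianReal_zero_one, exp_neg]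
  have := (cosh_pos a).ne'
  field_simp

lemma sechCubeRatio_eq (u a : ℝ) :
    sechCubeRatio u a = exp (-(u ^ 2 / 2)) * (cosh a)⁻¹ * ∫ x, (cosh (a + u * x))⁻¹ ^ 3 ∂γ := by
  rw [sechCubeRatio, integral_cosh_add_mul_gaussianReal_zero_one, exp_neg]
  have := (cosh_pos a).ne'
  field_simp

lemma hasDerivAt_tanhSqRatio (u a : ℝ) :
    HasDerivAt (tanhSqRatio · a) (2 * u * sechCubeRatio u a) u := by
  have hexp : HasDerivAt (fun u ↦ exp (-(u ^ 2 / 2))) (-u * exp (-(u ^ 2 / 2))) u :=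
    ((hasDerivAt_pow 2 u).div_const 2).fun_neg.exp.congr_deriv (by ring)
  rw [funext (tanhSqRatio_eq · a), sechCubeRatio_eq]
  refine (((hexp.mul_const (cosh a)⁻¹).mul
    (hasDerivAt_integral_inv_cosh_add_mul a u)).const_sub 1).congr_deriv ?_
  rw [integral_sub ((integrable_inv_cosh_add_mul_pow a u 3).const_mul 2)
    (by simpa using integrable_inv_cosh_add_mul_pow a u 1), integral_const_mul]
  ring

@[fun_prop]
lemma measurable_tanhSqRatio (u : ℝ) : Measurable (tanhSqRatio u) := by
  have := measurable_integral_comp_add_mul (μ := γ) (f := fun y ↦ (cosh y)⁻¹) (by fun_prop) u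
  rw [funext (tanhSqRatio_eq u)]
  fun_prop

@[fun_prop]
lemma measurable_sechCubeRatio (u : ℝ) : Measurable (sechCubeRatio u) := by
  have := measurable_integral_comp_add_mul (μ := γ) (f := fun y ↦ (cosh y)⁻¹ ^ 3) (by fun_prop) u
  rw [funext (sechCubeRatio_eq u)]
  fun_prop

lemma exp_mul_inv_cosh_mul_integral_mem_Icc (u a : ℝ) (n : ℕ) :
    exp (-(u ^ 2 / 2)) * (cosh a)⁻¹ * ∫ x, (cosh (a + u * x))⁻¹ ^ n ∂γ ∈ Set.Icc 0 1 := by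
  refine unitInterval.mul_mem (unitInterval.mul_mem
    ⟨(exp_pos _).le, exp_le_one_iff.2 (by nlinarith)⟩ (inv_cosh_mem_Icc a))
    (integral_mem_Icc_zero_one (by fun_prop) fun x ↦ ?_)
  obtain ⟨h0, h1⟩ := inv_cosh_mem_Icc (a + u * x)
  exact ⟨pow_nonneg h0 n, pow_le_one₀ h0 h1⟩

lemma abs_tanhSqRatio_le_one (u a : ℝ) : |tanhSqRatio u a| ≤ 1 := by
  obtain ⟨h0, h1⟩ := exp_mul_inv_cosh_mul_integral_mem_Icc u a 1
  simp only [pow_one] at h0 h1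
  rw [tanhSqRatio_eq, abs_le]
  constructor <;> linarith

lemma abs_sechCubeRatio_le_one (u a : ℝ) : |sechCubeRatio u a| ≤ 1 := by
  obtain ⟨h0, h1⟩ := exp_mul_inv_cosh_mul_integral_mem_Icc u a 3
  rw [sechCubeRatio_eq, abs_of_nonneg h0]
  exact h1

lemma hasDerivAt_tanhSqRatio_mul_sqrt_sub (β a : ℝ) {q s : ℝ} (hs : q < s) :
    HasDerivAt (fun t ↦ tanhSqRatio (β * √(t - q)) a)
      (β ^ 2 * sechCubeRatio (β * √(s - q)) a) s := by
  have hroot : √(s - q) ≠ 0 := (sqrt_pos.2 (sub_pos.2 hs)).ne'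
  have hu : HasDerivAt (fun t ↦ β * √(t - q)) (β * (1 / (2 * √(s - q)))) s :=
    (((hasDerivAt_id' s).sub_const q).sqrt (sub_ne_zero.2 hs.ne')).const_mul β
  refine ((hasDerivAt_tanhSqRatio _ a).comp s hu).congr_deriv ?_
  field_simp

theorem stmt_2_general (β h q : ℝ) :
    ∀ s ∈ Set.Ioo q 1,
      HasDerivAt
        (fun t : ℝ => ∫ ξ, ∫ z,
          (∫ z', Real.tanh (h * ξ + β * z * Real.sqrt q + β * z' * Real.sqrt (t - q)) ^ 2 *
              Real.cosh (h * ξ + β * z * Real.sqrt q + β * z' * Real.sqrt (t - q)) ∂γ) /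
          (∫ z', Real.cosh (h * ξ + β * z * Real.sqrt q + β * z' * Real.sqrt (t - q)) ∂γ)
            ∂γ ∂γ)
        (β ^ 2 * ∫ ξ, ∫ z,
          (∫ z', (Real.cosh (h * ξ + β * z * Real.sqrt q + β * z' * Real.sqrt (s - q)))⁻¹ ^ 3 ∂γ) /
          (∫ z', Real.cosh (h * ξ + β * z * Real.sqrt q + β * z' * Real.sqrt (s - q)) ∂γ)
            ∂γ ∂γ)
        s := by
  rintro s ⟨hqs, -⟩
  have key := hasDerivAt_integral_integral_of_forall_norm_le (μ := γ) (ν := γ) isOpen_Ioi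
    (F := fun t ξ z ↦ tanhSqRatio (β * √(t - q)) (h * ξ + β * z * √q))
    (F' := fun t ξ z ↦ β ^ 2 * sechCubeRatio (β * √(t - q)) (h * ξ + β * z * √q))
    (C := 1) (C' := β ^ 2) (fun _ _ ↦ by fun_prop) (fun _ _ _ _ ↦ abs_tanhSqRatio_le_one _ _)
    (fun _ _ ↦ by fun_prop)
    (fun _ _ _ _ ↦ by
      rw [norm_mul, Real.norm_eq_abs, abs_sq]
      exact mul_le_of_le_one_right (sq_nonneg β) (abs_sechCubeRatio_le_one _ _))
    (fun _ ht _ _ ↦ hasDerivAt_tanhSqRatio_mul_sqrt_sub β _ ht) (Set.mem_Ioi.2 hqs)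
  have hY : ∀ t ξ z z', h * ξ + β * z * √q + β * z' * √(t - q)
      = h * ξ + β * z * √q + β * √(t - q) * z' := by
    intros; ring
  simp only [integral_const_mul] at key
  simp only [hY]
  exact key

/-- Fix `β > 0`, `h > 0`, `q ∈ [0,1)`. With `Y(s) = hξ + βz√q + βz'√(s−q)`,
the map `s ↦ E[E'[tanh²(Y)cosh(Y)] / E'[cosh(Y)]]` is differentiable on `(q,1)`
with derivative `β² E[E'[cosh⁻³(Y)] / E'[cosh(Y)]]`. -/
theorem stmt_2 (β h q : ℝ) (hβ : 0 < β) (hh : 0 < h) (hq : q ∈ Set.Ico (0 : ℝ) 1) :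
    ∀ s ∈ Set.Ioo q 1,
      HasDerivAt
        (fun t : ℝ => ∫ ξ, ∫ z,
          (∫ z', Real.tanh (h * ξ + β * z * Real.sqrt q + β * z' * Real.sqrt (t - q)) ^ 2 *
              Real.cosh (h * ξ + β * z * Real.sqrt q + β * z' * Real.sqrt (t - q)) ∂γ) /
          (∫ z', Real.cosh (h * ξ + β * z * Real.sqrt q + β * z' * Real.sqrt (t - q)) ∂γ)
            ∂γ ∂γ)
        (β ^ 2 * ∫ ξ, ∫ z,
          (∫ z', (Real.cosh (h * ξ + β * z * Real.sqrt q + β * z' * Real.sqrt (s - q)))⁻¹ ^ 3 ∂γ) /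
          (∫ z', Real.cosh (h * ξ + β * z * Real.sqrt q + β * z' * Real.sqrt (s - q)) ∂γ)
            ∂γ ∂γ)
        s :=
  stmt_2_general β h q
end
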